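/- For every machine process P of the NFB translation, the set of weak observable actions of P w.r.t. H satisfies WkObs(P) ⊆ {lam, enter, skip, done, suc, z}; in particular no machine process has a weak barb on a coname. -/

import Mathlib

/-! ### HOcore: syntax, LTS, barbs, barbed bisimilarity -/

/-- Channel names of HOcore. -/
abbrev Name := ℕ

/-- HOcore processes, with de Bruijn indices for process variables. -/
inductive Proc : Type
  | nil : Proc
  | pvar : ℕ → Proc
  | par : Proc → Proc → Proc
  | inp : Name → Proc → Proc
  | out : Name → Proc → Proc
  deriving DecidableEq

namespace Proc

/-- Shift the free de Bruijn indices `≥ k` by `d`. -/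
def lift (d : ℕ) : ℕ → Proc → Proc
  | _, nil => nil
  | k, pvar n => if n < k then pvar n else pvar (n + d)
  | k, par P Q => par (lift d k P) (lift d k Q)
  | k, inp a P => inp a (lift d (k + 1) P)
  | k, out a P => out a (lift d k P)

/-- Capture-avoiding substitution of `S` for the de Bruijn index `k` in `P`. -/
def subst : Proc → ℕ → Proc → Proc
  | nil, _, _ => nil
  | pvar n, k, S => if n = k then lift k 0 S else if k < n then pvar (n - 1) else pvar n
  | par P Q, k, S => par (subst P k S) (subst Q k S)
  | inp a P, k, S => inp a (subst P (k + 1) S)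
  | out a P, k, S => out a (subst P k S)

/-- Free channel names of a process. -/
def fnames : Proc → Finset Name
  | nil => ∅
  | pvar _ => ∅
  | par P Q => fnames P ∪ fnames Q
  | inp a P => insert a (fnames P)
  | out a P => insert a (fnames P)

end Proc

/-- Labels of the HOcore LTS: internal step, output, input. -/
inductive Label
  | tau : Label
  | outl : Name → Proc → Label
  | inl : Name → Proc → Label

/-- Structural congruence: parallel composition is associative, commutative,
and has `nil` as a neutral element. -/
inductive SCong : Proc → Proc → Prop
  | refl (P) : SCong P P
  | symm {P Q} : SCong P Q → SCong Q P
  | trans {P Q R} : SCong P Q → SCong Q R → SCong P R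
  | parComm (P Q) : SCong (.par P Q) (.par Q P)
  | parAssoc (P Q R) : SCong (.par (.par P Q) R) (.par P (.par Q R))
  | parNil (P) : SCong (.par P .nil) P
  | parCong {P P' Q Q'} : SCong P P' → SCong Q Q' → SCong (.par P Q) (.par P' Q')
  | inpCong {P P'} (a) : SCong P P' → SCong (.inp a P) (.inp a P')
  | outCong {P P'} (a) : SCong P P' → SCong (.out a P) (.out a P')

/-- The labeled transition system of HOcore (processes are considered up to
structural congruence). -/
inductive Step : Proc → Label → Proc → Prop
  | outS (a P) : Step (.out a P) (.outl a P) .nil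
  | inpS (a Q P) : Step (.inp a Q) (.inl a P) (Q.subst 0 P)
  | parL {P l P'} (Q) : Step P l P' → Step (.par P Q) l (.par P' Q)
  | parR {Q l Q'} (P) : Step Q l Q' → Step (.par P Q) l (.par P Q')
  | comm1 {P Q P' Q' a R} : Step P (.outl a R) P' → Step Q (.inl a R) Q' →
      Step (.par P Q) .tau (.par P' Q')
  | comm2 {P Q P' Q' a R} : Step P (.inl a R) P' → Step Q (.outl a R) Q' →
      Step (.par P Q) .tau (.par P' Q')
  | struct {P P' l Q Q'} : SCong P P' → Step P' l Q' → SCong Q' Q → Step P l Q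

/-- One internal step. -/
def TauStep (P Q : Proc) : Prop := Step P Label.tau Q

/-- Weak internal transition `==tau==>`. -/
def WTau : Proc → Proc → Prop := Relation.ReflTransGen TauStep

/-- Observables: input on a name, or output on a name (a coname). -/
inductive Barb
  | inb : Name → Barb
  | outb : Name → Barb
  deriving DecidableEq

/-- Strong observable action w.r.t. a set `H` of hidden names. -/
def StrongBarb (H : Set Name) (P : Proc) : Barb → Prop
  | .inb a => a ∉ H ∧ ∃ Q R, Step P (Label.inl a Q) R
  | .outb a => a ∉ H ∧ ∃ Q R, Step P (Label.outl a Q) R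

/-- Weak observable action w.r.t. a set `H` of hidden names. -/
def WeakBarb (H : Set Name) (P : Proc) (α : Barb) : Prop :=
  ∃ P', WTau P P' ∧ StrongBarb H P' α

/-- Barbed bisimulation w.r.t. the hidden names `H`. -/
def IsBarbedBisim (H : Set Name) (R : Proc → Proc → Prop) : Prop :=
  Symmetric R ∧ ∀ P Q, R P Q →
    (∀ α, StrongBarb H P α → WeakBarb H Q α) ∧
    (∀ S : Proc, ((S.fnames : Set Name) ∩ H = ∅) → R (.par P S) (.par Q S)) ∧
    (∀ P', Step P Label.tau P' → ∃ Q', WTau Q Q' ∧ R P' Q')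

/-- Barbed equivalence w.r.t. the hidden names `H`. -/
def BarbedEquiv (H : Set Name) (P Q : Proc) : Prop :=
  ∃ R, IsBarbedBisim H R ∧ R P Q
/-! ### Open call-by-name lambda-terms (free variables are natural numbers)
and the KAM -/

/-- Lambda-terms: free variables `fvar f` (natural numbers) and bound variables
in de Bruijn representation. -/
inductive Term
  | fvar : ℕ → Term
  | bvar : ℕ → Term
  | lam : Term → Term
  | app : Term → Term → Term
  deriving DecidableEq

namespace Term

/-- Shift the de Bruijn indices `≥ k` by `d`. -/
def liftT (d : ℕ) : ℕ → Term → Term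
  | _, fvar f => fvar f
  | k, bvar n => if n < k then bvar n else bvar (n + d)
  | k, lam t => lam (liftT d (k + 1) t)
  | k, app t s => app (liftT d k t) (liftT d k s)

/-- Capture-avoiding substitution of `s` for the de Bruijn index `k`. -/
def substT : Term → ℕ → Term → Term
  | fvar f, _, _ => fvar f
  | bvar n, k, s => if n = k then liftT k 0 s else if k < n then bvar (n - 1) else bvar n
  | lam t, k, s => lam (substT t (k + 1) s)
  | app t u, k, s => app (substT t k s) (substT u k s)

/-- Free variables of a term. -/
def fv : Term → Finset ℕ
  | fvar f => {f}
  | bvar _ => ∅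
  | lam t => fv t
  | app t s => fv t ∪ fv s

end Term

/-- Stacks of the KAM. -/
inductive Stack
  | nil : Stack
  | cons : Term → Stack → Stack

/-- Configurations of the KAM. -/
structure KConf where
  t : Term
  π : Stack

/-- Transitions of the KAM. -/
inductive KStep : KConf → KConf → Prop
  | push {t s π} : KStep ⟨.app t s, π⟩ ⟨t, .cons s π⟩
  | grab {t s π} : KStep ⟨.lam t, .cons s π⟩ ⟨t.substT 0 s, π⟩

/-- Reflexive-transitive closure of KAM transitions. -/
def KSteps : KConf → KConf → Prop := Relation.ReflTransGen KStep
/-! ### The NFB machine -/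

/-- Flags of the NFB machine: `lam`, `done`, `enter`, `skip` and free variables
(natural numbers). -/
inductive NFlag
  | flam | fdone | fenter | fskip
  | fvarF : ℕ → NFlag
  deriving DecidableEq

/-- Labels of the NFB machine: `tau` or a flag. -/
inductive MLabel
  | tau : MLabel
  | flag : NFlag → MLabel

/-- Configurations of the NFB machine: evaluation mode `<t | π | n>_ev` and
continuation mode `<π | n>_cont`. -/
inductive NConf
  | ev : Term → Stack → ℕ → NConf
  | cont : Stack → ℕ → NConf

/-- Labeled transitions of the NFB machine. -/
inductive NStep : NConf → MLabel → NConf → Prop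
  | push {t s π n} : NStep (.ev (.app t s) π n) .tau (.ev t (.cons s π) n)
  | grab {t s π n} : NStep (.ev (.lam t) (.cons s π) n) .tau (.ev (t.substT 0 s) π n)
  | lambda {t n} : NStep (.ev (.lam t) .nil n) (.flag .flam)
      (.ev (t.substT 0 (.fvar n)) .nil (n + 1))
  | var {f π n} : NStep (.ev (.fvar f) π n) (.flag (.fvarF f)) (.cont π n)
  | enter {t π n} : NStep (.cont (.cons t π) n) (.flag .fenter) (.ev t .nil n)
  | skip {t π n} : NStep (.cont (.cons t π) n) (.flag .fskip) (.cont π n)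

/-- Terminating flagged transitions of the NFB machine (no target configuration). -/
inductive NFinal : NConf → NFlag → Prop
  | done {n} : NFinal (.cont .nil n) .fdone

/-- Silent transitions of the NFB machine. -/
def NTau (C C' : NConf) : Prop := NStep C .tau C'

/-- Flagged transitions of the NFB machine. -/
def NFlagStep (C : NConf) (F : NFlag) (C' : NConf) : Prop := NStep C (.flag F) C'
/-! ### Translation of the NFB machine into HOcore -/

def hdN : Name := 0
def cN : Name := 1
def bN : Name := 2
def kN : Name := 3
def sucN : Name := 4
def zN : Name := 5
def initN : Name := 6
def recN : Name := 7
def chN : Name := 8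
def lamN : Name := 9
def enterN : Name := 10
def skipN : Name := 11
def doneN : Name := 12

/-- Translation of the empty stack: `[[ [] ]] = b(x).x`. -/
def trMt : Proc := .inp bN (.pvar 0)

/-- Translation `<<f>>` of a free variable (also used for the counter):
`<<0>> = z(_).init!<0>` and `<<f+1>> = suc(_).<<f>>`. -/
def trFV : ℕ → Proc
  | 0 => .inp zN (.out initN .nil)
  | f + 1 => .inp sucN (trFV f)

/-- `Restart = lam(_).k(x).(hd!<x> || k!<suc(_).x> || c!<[[ [] ]]> || b!<0>)`. -/
def Restart : Proc :=
  .inp lamN (.inp kN (.par (.out hdN (.pvar 0))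
    (.par (.out kN (.inp sucN (.pvar 1)))
      (.par (.out cN trMt) (.out bN .nil)))))

/-- Internal choice `P + Q = ch!<P> || ch!<Q> || ch(x).ch(_).x`. -/
def choicePlus (P Q : Proc) : Proc :=
  .par (.out chN P) (.par (.out chN Q) (.inp chN (.inp chN (.pvar 1))))

/-- `Choice(P) = enter(_).c(_).(P || c!<[[ [] ]]>) + skip(_).init!<0>`. -/
def Choice (P : Proc) : Proc :=
  choicePlus (.inp enterN (.inp cN (.par (P.lift 2 0) (.out cN trMt))))
    (.inp skipN (.out initN .nil))

/-- `Cont = c(p).(p || b!<done(_).0> || hd(x).b(_).Choice(x))`. -/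
def ContP : Proc :=
  .inp cN (.par (.pvar 0)
    (.par (.out bN (.inp doneN .nil))
      (.inp hdN (.inp bN (Choice (.pvar 1))))))

/-- `Rec = init(_).rec(x).(x || rec!<x> || Cont)`. -/
def RecP : Proc :=
  .inp initN (.inp recN (.par (.pvar 0) (.par (.out recN (.pvar 0)) ContP)))

/-- Translation of NFB terms into HOcore. -/
def trTN : Term → Proc
  | .fvar f => trFV f
  | .bvar n => .pvar n
  | .app t s =>
      .inp cN (.par ((trTN t).lift 1 0)
        (.out cN (.par (.out hdN ((trTN s).lift 1 0)) (.out cN (.pvar 0)))))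
  | .lam t =>
      .inp cN (.par (.pvar 0)
        (.par (.out bN Restart)
          (.inp hdN (.inp bN (((trTN t).lift 1 0).lift 1 2)))))

/-- Translation of stacks. -/
def trStkN : Stack → Proc
  | .nil => trMt
  | .cons t π => .par (.out hdN (trTN t)) (.out cN (trStkN π))

/-- Translation of NFB machine configurations. -/
def trNConf : NConf → Proc
  | .ev t π n =>
      .par (trTN t) (.par (.out cN (trStkN π))
        (.par (.out kN (trFV n)) (.par RecP (.out recN RecP))))
  | .cont π n =>
      .par (.out cN (trStkN π)) (.par (.out kN (trFV n))
        (.par ContP (.par RecP (.out recN RecP))))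

/-- A machine process is a weak tau-derivative of a translated configuration. -/
def MachineProc (P : Proc) : Prop := ∃ C : NConf, WTau (trNConf C) P

/-- The flag names. -/
def FlagNames : Set Name := {lamN, enterN, skipN, doneN, sucN, zN}

/-- The hidden names: names of the translation that are not flag names. -/
def HSet : Set Name := {hdN, cN, bN, kN, initN, recN, chN}

/-- Weak observable actions of a process w.r.t. `HSet`. -/
def WkObs (P : Proc) : Set Barb := {α | WeakBarb HSet P α}

/-- The choice process reachable from `[[<t::π | n>_cont]]`. -/
def ChoiceConfig (t : Term) (π : Stack) (n : ℕ) : Proc :=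
  .par (Choice (trTN t)) (.par (.out cN (trStkN π))
    (.par (.out kN (trFV n)) (.par RecP (.out recN RecP))))

/-- Choice processes (up to structural congruence). -/
def IsChoiceProc (P : Proc) : Prop :=
  ∃ t π n, SCong P (ChoiceConfig t π n) ∧ WTau (trNConf (.cont (.cons t π) n)) P

/-- An input transition on the name `a`. -/
def inpStep (a : Name) (P Q : Proc) : Prop := ∃ R, Step P (Label.inl a R) Q

/-- `n` successive input transitions on `suc`. -/
def sucSeq : ℕ → Proc → Proc → Prop
  | 0, P, Q => P = Q
  | f + 1, P, Q => ∃ P', inpStep sucN P P' ∧ sucSeq f P' Q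

/-- Process-level transition corresponding to a machine flag: a transition on
the corresponding flag name; for a free variable `f`, `f` transitions on `suc`
followed by one on `z`. -/
def FlagStepP : NFlag → Proc → Proc → Prop
  | .flam => inpStep lamN
  | .fenter => inpStep enterN
  | .fskip => inpStep skipN
  | .fdone => inpStep doneN
  | .fvarF f => fun P Q => ∃ P', sucSeq f P P' ∧ inpStep zN P' Q

/-- Process-level transition for a machine label (`tau` or a flag). -/
def MLStepP : MLabel → Proc → Proc → Prop
  | .tau => fun P Q => Step P Label.tau Q
  | .flag F => FlagStepP F

/-- Weak process-level machine-labeled transition. -/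
def WMLStepP (l : MLabel) (P Q : Proc) : Prop :=
  ∃ P1 P2, WTau P P1 ∧ MLStepP l P1 P2 ∧ WTau P2 Q

/-! Every input prefix occurring anywhere in a machine process is on a name of the translation,
and every output prefix is on a hidden name. The translation of a configuration has this property,
and it is preserved by transitions: substitution only plugs in a process that was itself sent, and
sent processes satisfy it. A weak barb is a strong barb of a tau-derivative, so a visible input
is on a flag name and there is no visible output. -/

open Proc

section Invariant

variable {I O : Set Name}

namespace Proc

def SubjectsIn (I O : Set Name) : Proc → Prop
  | nil => True
  | pvar _ => True
  | par P Q => SubjectsIn I O P ∧ SubjectsIn I O Q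
  | inp a P => a ∈ I ∧ SubjectsIn I O P
  | out a P => a ∈ O ∧ SubjectsIn I O P

@[simp]
theorem subjectsIn_lift (d k : ℕ) (P : Proc) : SubjectsIn I O (P.lift d k) ↔ SubjectsIn I O P := by
  induction P generalizing k with
  | pvar n => unfold lift; split <;> rfl
  | _ => simp_all [lift, SubjectsIn]

theorem SubjectsIn.subst {P S : Proc} (hP : SubjectsIn I O P) (hS : SubjectsIn I O S) (k : ℕ) :
    SubjectsIn I O (P.subst k S) := by
  induction P generalizing k with
  | pvar n =>
    unfold Proc.subst
    split_ifs <;> simp_all [SubjectsIn]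
  | _ => simp_all [Proc.subst, SubjectsIn]

end Proc

theorem SCong.subjectsIn_iff {P Q : Proc} (h : SCong P Q) : SubjectsIn I O P ↔ SubjectsIn I O Q := by
  induction h with
  | refl => rfl
  | symm _ ih => exact ih.symm
  | trans _ _ ih₁ ih₂ => exact ih₁.trans ih₂
  | _ => simp_all [SubjectsIn, and_comm, and_assoc]

def SubjectsInAfter (I O : Set Name) (Q : Proc) : Label → Prop
  | .tau => SubjectsIn I O Q
  | .outl a R => a ∈ O ∧ SubjectsIn I O R ∧ SubjectsIn I O Q
  | .inl a R => a ∈ I ∧ (SubjectsIn I O R → SubjectsIn I O Q)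

theorem Step.subjectsInAfter {P Q : Proc} {l : Label} (h : Step P l Q) (hP : SubjectsIn I O P) :
    SubjectsInAfter I O Q l := by
  induction h with
  | outS => exact ⟨hP.1, hP.2, trivial⟩
  | inpS => exact ⟨hP.1, fun hR => hP.2.subst hR 0⟩
  | @parL _ l _ _ _ ih => cases l <;> simp_all [SubjectsIn, SubjectsInAfter]
  | @parR _ l _ _ _ ih => cases l <;> simp_all [SubjectsIn, SubjectsInAfter]
  | comm1 _ _ ih₁ ih₂ =>
    obtain ⟨-, hR, hP'⟩ := ih₁ hP.1
    exact ⟨hP', (ih₂ hP.2).2 hR⟩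
  | comm2 _ _ ih₁ ih₂ =>
    obtain ⟨-, hR, hQ'⟩ := ih₂ hP.2
    exact ⟨(ih₁ hP.1).2 hR, hQ'⟩
  | @struct _ _ l _ _ h₁ _ h₂ ih =>
    have := ih (h₁.subjectsIn_iff.1 hP)
    cases l <;> simp_all [SubjectsInAfter, h₂.subjectsIn_iff]

theorem WTau.subjectsIn {P Q : Proc} (h : WTau P Q) (hP : SubjectsIn I O P) : SubjectsIn I O Q := by
  induction h with
  | refl => exact hP
  | tail _ hstep ih => exact hstep.subjectsInAfter ih

theorem Proc.SubjectsIn.mem_of_weakBarb_inb {H : Set Name} {P : Proc} {a : Name}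
    (hP : SubjectsIn I O P) (h : WeakBarb H P (.inb a)) : a ∈ I \ H := by
  obtain ⟨P', hPP', haH, _, _, hstep⟩ := h
  exact ⟨(hstep.subjectsInAfter (hPP'.subjectsIn hP)).1, haH⟩

theorem Proc.SubjectsIn.mem_of_weakBarb_outb {H : Set Name} {P : Proc} {a : Name}
    (hP : SubjectsIn I O P) (h : WeakBarb H P (.outb a)) : a ∈ O \ H := by
  obtain ⟨P', hPP', haH, _, _, hstep⟩ := h
  exact ⟨(hstep.subjectsInAfter (hPP'.subjectsIn hP)).1, haH⟩

end Invariant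

section Translation

local notation "Inv" => SubjectsIn (FlagNames ∪ HSet) HSet

attribute [local simp] SubjectsIn FlagNames HSet hdN cN bN kN sucN zN initN recN chN lamN enterN
  skipN doneN

theorem subjectsIn_trFV (f : ℕ) : Inv (trFV f) := by
  induction f <;> simp_all [trFV]

theorem subjectsIn_contP : Inv ContP := by
  simp [ContP, Choice, choicePlus, trMt]

theorem subjectsIn_trTN (t : Term) : Inv (trTN t) := by
  induction t with
  | fvar f => exact subjectsIn_trFV f
  | bvar _ => trivial
  | lam t ih => simp_all [trTN, Restart, trMt]
  | app t s iht ihs => simp_all [trTN]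

theorem subjectsIn_trStkN (π : Stack) : Inv (trStkN π) := by
  induction π with
  | nil => simp [trStkN, trMt]
  | cons t π ih =>
    have := subjectsIn_trTN t
    simp_all [trStkN]

theorem subjectsIn_trNConf (C : NConf) : Inv (trNConf C) := by
  have := subjectsIn_contP
  cases C with
  | ev t π n =>
    have := subjectsIn_trTN t
    have := subjectsIn_trStkN π
    have := subjectsIn_trFV n
    simp_all [trNConf, RecP]
  | cont π n =>
    have := subjectsIn_trStkN π
    have := subjectsIn_trFV n
    simp_all [trNConf, RecP]

end Translation

theorem machine_process_weak_observables (P : Proc) (hP : MachineProc P) :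
    WkObs P ⊆ ({.inb lamN, .inb enterN, .inb skipN, .inb doneN, .inb sucN, .inb zN} :
        Set Barb) ∧
    ∀ a : Name, Barb.outb a ∉ WkObs P := by
  obtain ⟨C, hC⟩ := hP
  have hinv : SubjectsIn (FlagNames ∪ HSet) HSet P := hC.subjectsIn (subjectsIn_trNConf C)
  have no_outb (a : Name) : Barb.outb a ∉ WkObs P := fun h =>
    let ⟨haH, haH'⟩ := hinv.mem_of_weakBarb_outb h
    haH' haH
  refine ⟨?_, no_outb⟩
  rintro (a | a) h
  · obtain ⟨haI, haH⟩ := hinv.mem_of_weakBarb_inb h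
    simpa [FlagNames] using haI.resolve_right haH
  · exact absurd h (no_outb a)
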